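/- arXiv:2502.21167 — 5 statements merged into one kernel-verified Lean document; each statement's English description precedes it below -/
import Mathlib

section
/- (Birch's theorem) Let S ⊆ ℝ^n be a linear subspace and x₀, x* ∈ ℝ^n with all coordinates positive. Then the intersection (x₀ + S) ∩ {x* ∘ e^v : v ∈ S^⊥} consists of exactly one point, where x* ∘ e^v denotes the componentwise product (x*_1 e^{v_1}, ..., x*_n e^{v_n}). -/
/-!
The potential `F v = ∑ i, (x*ᵢ e^{vᵢ} - x₀ᵢ vᵢ)` has gradient `x* ∘ e^v - x₀`. Since `x₀` is
positive, `F` grows at least linearly in `‖v‖`, so it attains its minimum on `Sᗮ`; there the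
gradient is orthogonal to `Sᗮ`, i.e. `x* ∘ e^v - x₀ ∈ S`, which gives a point of the intersection.
For uniqueness, if `x* ∘ e^v - x* ∘ e^w ∈ S` and `v - w ∈ Sᗮ`, then
`0 = ⟪x* ∘ e^v - x* ∘ e^w, v - w⟫ = ∑ i, x*ᵢ (e^{vᵢ} - e^{wᵢ}) (vᵢ - wᵢ)`, a sum of nonnegative
terms that all vanish only if `v = w`, by strict monotonicity of `exp`.
-/

open Real Filter

lemma mul_abs_sub_le_mul_exp_sub_mul {a : ℝ} (ha : 0 < a) (b t : ℝ) :
    b * |t| - 4 * b ^ 2 / a ≤ a * exp t - b * t := by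
  have h_const : 0 ≤ 4 * b ^ 2 / a := by positivity
  rcases le_or_gt t 0 with ht | ht
  · rw [abs_of_nonpos ht]
    nlinarith [exp_pos t]
  · rw [abs_of_pos ht]
    have h_sq : t ^ 2 / 4 ≤ exp t := by
      have h_half := add_one_le_exp (t / 2)
      have h_exp : exp t = exp (t / 2) * exp (t / 2) := by rw [← exp_add, add_halves]
      nlinarith [exp_pos (t / 2)]
    have h_amgm : 2 * b * t - 4 * b ^ 2 / a ≤ a * (t ^ 2 / 4) := by
      have h_square : a * (t ^ 2 / 4) - (2 * b * t - 4 * b ^ 2 / a) =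
          (a * t - 4 * b) ^ 2 / (4 * a) := by
        field_simp; ring
      have : 0 ≤ (a * t - 4 * b) ^ 2 / (4 * a) := by positivity
      linarith
    nlinarith

lemma exp_sub_exp_mul_sub_nonneg (a b : ℝ) : 0 ≤ (exp a - exp b) * (a - b) := by
  rcases le_total a b with h | h
  · exact mul_nonneg_of_nonpos_of_nonpos (sub_nonpos.2 (exp_le_exp.2 h)) (sub_nonpos.2 h)
  · exact mul_nonneg (sub_nonneg.2 (exp_le_exp.2 h)) (sub_nonneg.2 h)

lemma eq_of_exp_sub_exp_mul_sub_eq_zero {a b : ℝ} (h : (exp a - exp b) * (a - b) = 0) :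
    a = b := by
  rcases mul_eq_zero.1 h with h | h
  · exact exp_injective (sub_eq_zero.1 h)
  · exact sub_eq_zero.1 h

lemma exists_pos_forall_le_of_pos {ι : Type*} [Finite ι] {f : ι → ℝ} (hf : ∀ i, 0 < f i) :
    ∃ c > 0, ∀ i, c ≤ f i := by
  cases isEmpty_or_nonempty ι
  · exact ⟨1, one_pos, isEmptyElim⟩
  · obtain ⟨i₀, hi₀⟩ := Finite.exists_min f
    exact ⟨f i₀, hf i₀, hi₀⟩

lemma EuclideanSpace.norm_le_sum_abs {ι : Type*} [Fintype ι] (v : EuclideanSpace ℝ ι) :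
    ‖v‖ ≤ ∑ i, |v i| := by
  rw [EuclideanSpace.norm_eq]
  refine sqrt_le_iff.2 ⟨Finset.sum_nonneg fun i _ => abs_nonneg _, ?_⟩
  simpa only [norm_eq_abs] using
    Finset.sum_sq_le_sq_sum_of_nonneg (s := Finset.univ) fun i _ => abs_nonneg (v i)

lemma mem_orthogonal_of_hasGradientAt_of_isMinOn {E : Type*} [NormedAddCommGroup E]
    [InnerProductSpace ℝ E] [CompleteSpace E] {f : E → ℝ} {g u : E} {K : Submodule ℝ E}
    (hf : HasGradientAt f g u) (hu : u ∈ K) (hmin : IsMinOn f K u) : g ∈ Kᗮ := by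
  intro w hw
  have h_line : HasDerivAt (fun t : ℝ => f (u + t • w)) (inner ℝ g ((1 : ℝ) • w)) 0 :=
    hf.hasFDerivAt.comp_hasDerivAt_of_eq 0 (((hasDerivAt_id 0).smul_const w).const_add u)
      (by simp)
  have h_min : IsLocalMin (fun t : ℝ => f (u + t • w)) 0 :=
    Eventually.of_forall fun t => by
      simpa using hmin (K.add_mem hu (K.smul_mem t hw))
  simpa [real_inner_comm] using h_min.hasDerivAt_eq_zero h_line

section Birch

variable {ι : Type*} [Fintype ι]

noncomputable def mulExp (xs v : EuclideanSpace ℝ ι) : EuclideanSpace ℝ ι :=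
  WithLp.toLp 2 fun i => xs i * exp (v i)

noncomputable def birchPotential (x₀ xs v : EuclideanSpace ℝ ι) : ℝ :=
  ∑ i, (xs i * exp (v i) - x₀ i * v i)

lemma hasGradientAt_birchPotential (x₀ xs u : EuclideanSpace ℝ ι) :
    HasGradientAt (birchPotential x₀ xs) (mulExp xs u - x₀) u := by
  have h_coord (i : ι) : HasFDerivAt (fun v : EuclideanSpace ℝ ι => xs i * exp (v i) - x₀ i * v i)
      ((xs i * exp (u i) - x₀ i) • EuclideanSpace.proj (𝕜 := ℝ) i) u := by
    have h_proj := (EuclideanSpace.proj (𝕜 := ℝ) (ι := ι) i).hasFDerivAt (x := u)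
    refine ((h_proj.exp.const_mul (xs i)).sub (h_proj.const_mul (x₀ i))).congr_fderiv ?_
    ext w
    simp only [sub_apply, smul_apply, smul_eq_mul, PiLp.proj_apply]
    ring
  rw [hasGradientAt_iff_hasFDerivAt]
  refine (HasFDerivAt.fun_sum (u := Finset.univ) fun i _ => h_coord i).congr_fderiv ?_
  ext w
  simp [mulExp, PiLp.inner_apply, sub_mul, mul_comm]

lemma tendsto_birchPotential_cocompact {x₀ xs : EuclideanSpace ℝ ι}
    (hx₀ : ∀ i, 0 < x₀ i) (hxs : ∀ i, 0 < xs i) :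
    Tendsto (birchPotential x₀ xs) (cocompact _) atTop := by
  obtain ⟨c, hc, hc_le⟩ := exists_pos_forall_le_of_pos hx₀
  set K := ∑ i, 4 * x₀ i ^ 2 / xs i
  have h_bound : ∀ v, c * ‖v‖ - K ≤ birchPotential x₀ xs v := fun v =>
    calc c * ‖v‖ - K ≤ ∑ i, (x₀ i * |v i| - 4 * x₀ i ^ 2 / xs i) := by
          have h_norm : c * ‖v‖ ≤ ∑ i, x₀ i * |v i| :=
            calc c * ‖v‖ ≤ c * ∑ i, |v i| := by gcongr; exact EuclideanSpace.norm_le_sum_abs v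
              _ ≤ ∑ i, x₀ i * |v i| := by
                rw [Finset.mul_sum]; gcongr with i; exact hc_le i
          rw [Finset.sum_sub_distrib]
          linarith
      _ ≤ birchPotential x₀ xs v :=
          Finset.sum_le_sum fun i _ => mul_abs_sub_le_mul_exp_sub_mul (hxs i) (x₀ i) (v i)
  exact tendsto_atTop_mono h_bound <|
    tendsto_atTop_add_const_right _ _ (tendsto_norm_cocompact_atTop.const_mul_atTop hc)

lemma exists_mulExp_sub_mem {x₀ xs : EuclideanSpace ℝ ι} (hx₀ : ∀ i, 0 < x₀ i)
    (hxs : ∀ i, 0 < xs i) (S : Submodule ℝ (EuclideanSpace ℝ ι)) :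
    ∃ v ∈ Sᗮ, mulExp xs v - x₀ ∈ S := by
  have h_grad := hasGradientAt_birchPotential (ι := ι) x₀ xs
  have h_cont : Continuous (birchPotential x₀ xs) :=
    continuous_iff_continuousAt.2 fun u => (h_grad u).differentiableAt.continuousAt
  have h_tendsto : Tendsto (birchPotential x₀ xs ∘ (↑) : Sᗮ → ℝ) (cocompact Sᗮ) atTop :=
    (tendsto_birchPotential_cocompact hx₀ hxs).comp
      (Submodule.isClosed_orthogonal S).isClosedEmbedding_subtypeVal.tendsto_cocompact
  obtain ⟨⟨u, hu⟩, hu_min⟩ := (h_cont.comp continuous_subtype_val).exists_forall_le h_tendsto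
  refine ⟨u, hu, ?_⟩
  rw [← S.orthogonal_orthogonal]
  exact mem_orthogonal_of_hasGradientAt_of_isMinOn (h_grad u) hu fun w hw => hu_min ⟨w, hw⟩

lemma inner_mulExp_sub_mulExp (xs v w : EuclideanSpace ℝ ι) :
    inner ℝ (mulExp xs v - mulExp xs w) (v - w) =
      ∑ i, xs i * ((exp (v i) - exp (w i)) * (v i - w i)) := by
  simp only [PiLp.inner_apply, RCLike.inner_apply, conj_trivial, PiLp.sub_apply, mulExp]
  exact Finset.sum_congr rfl fun i _ => by ring

lemma eq_of_mulExp_sub_mulExp_mem {xs v w : EuclideanSpace ℝ ι} (hxs : ∀ i, 0 < xs i)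
    {S : Submodule ℝ (EuclideanSpace ℝ ι)} (hS : mulExp xs v - mulExp xs w ∈ S)
    (hv : v - w ∈ Sᗮ) : v = w := by
  have h_zero := S.inner_right_of_mem_orthogonal hS hv
  rw [inner_mulExp_sub_mulExp] at h_zero
  have h_terms := (Finset.sum_eq_zero_iff_of_nonneg fun i _ =>
    mul_nonneg (hxs i).le (exp_sub_exp_mul_sub_nonneg (v i) (w i))).1 h_zero
  ext i
  exact eq_of_exp_sub_exp_mul_sub_eq_zero <|
    (mul_eq_zero.1 (h_terms i (Finset.mem_univ i))).resolve_left (hxs i).ne'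

end Birch

/-- Birch's theorem: For a subspace `S ⊆ ℝⁿ` and positive vectors
`x₀, x*`, the intersection `(x₀ + S) ∩ {x* ∘ e^v : v ∈ S^⊥}` is a singleton. -/
theorem stmt5 (n : ℕ) (S : Submodule ℝ (EuclideanSpace ℝ (Fin n)))
    (x₀ xs : EuclideanSpace ℝ (Fin n))
    (hx₀ : ∀ i, 0 < x₀ i) (hxs : ∀ i, 0 < xs i) :
    ∃! x : EuclideanSpace ℝ (Fin n),
      x - x₀ ∈ S ∧ ∃ v ∈ Sᗮ, ∀ i, x i = xs i * Real.exp (v i) := by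
  obtain ⟨v, hv, hv_mem⟩ := exists_mulExp_sub_mem hx₀ hxs S
  refine ⟨mulExp xs v, ⟨hv_mem, v, hv, fun i => rfl⟩, ?_⟩
  rintro y ⟨hy, w, hw, hyw⟩
  have hy_eq : y = mulExp xs w := by ext i; exact hyw i
  subst hy_eq
  rw [eq_of_mulExp_sub_mulExp_mem hxs (by simpa using S.sub_mem hy hv_mem) (Sᗮ.sub_mem hw hv)]
end

section
/- Let B ∈ ℝ^{n×m} with blocks B_j ∈ ℝ^{n×m_j}, and let 𝓑 = (B; J) ∈ ℝ^{(n+ℓ)×m} where J ∈ ℝ^{ℓ×m} is the block-diagonal matrix with rows 1_{m_j}ᵀ (the Cayley matrix). Let M = B·I ∈ ℝ^{n×(m−ℓ)} where I is the block-diagonal matrix with blocks I_{m_j} = (id_{m_j−1}; −1ᵀ_{m_j−1}) ∈ ℝ^{m_j×(m_j−1)}. Then dim(ker 𝓑) = dim(ker M). -/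
/-- For `B` with `ℓ` blocks, the kernel of the Cayley-extended matrix
`𝓑 = (B; J)` has the same dimension as the kernel of the monomial difference matrix
`M = B · I`. -/
theorem stmt9 (n ℓ : ℕ) (m : Fin ℓ → ℕ) (hm : ∀ j, 1 ≤ m j)
    (B : Matrix (Fin n) ((j : Fin ℓ) × Fin (m j)) ℝ)
    (J : Matrix (Fin ℓ) ((j : Fin ℓ) × Fin (m j)) ℝ)
    (hJ : ∀ j p, J j p = if p.1 = j then 1 else 0)
    (I : Matrix ((j : Fin ℓ) × Fin (m j)) ((j : Fin ℓ) × Fin (m j - 1)) ℝ)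
    (hI : ∀ p q, I p q = if p.1 = q.1 then
        (if (p.2 : ℕ) = (q.2 : ℕ) then 1 else if (p.2 : ℕ) = m p.1 - 1 then -1 else 0)
      else 0) :
    Module.finrank ℝ (LinearMap.ker (Matrix.fromRows B J).mulVecLin)
      = Module.finrank ℝ (LinearMap.ker (B * I).mulVecLin) := by
  classical
  have hm1 : ∀ j, m j - 1 < m j := fun j => by have := hm j; omega
  -- embedding of Fin (m j - 1) into Fin (m j)
  have elt : ∀ (j : Fin ℓ) (q : Fin (m j - 1)), (q : ℕ) < m j := fun j q => by
    have := q.isLt; omega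
  set e : ∀ j, Fin (m j - 1) → Fin (m j) := fun j q => ⟨q, elt j q⟩ with he
  -- restriction map
  set r : (((j : Fin ℓ) × Fin (m j)) → ℝ) → (((j : Fin ℓ) × Fin (m j - 1)) → ℝ) :=
    fun x q => x ⟨q.1, e q.1 q.2⟩ with hr
  -- sums over sigma types
  have sumSigma : ∀ (f : ((j : Fin ℓ) × Fin (m j)) → ℝ),
      ∑ p, f p = ∑ j, ∑ i, f ⟨j, i⟩ := fun f => by
    rw [← Finset.univ_sigma_univ, Finset.sum_sigma]
  have sumSigma' : ∀ (f : ((j : Fin ℓ) × Fin (m j - 1)) → ℝ),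
      ∑ p, f p = ∑ j, ∑ q, f ⟨j, q⟩ := fun f => by
    rw [← Finset.univ_sigma_univ, Finset.sum_sigma]
  -- Matrix.mulVec J x computation
  have hJmul : ∀ (x : ((j : Fin ℓ) × Fin (m j)) → ℝ) (j : Fin ℓ),
      (Matrix.mulVec J x) j = ∑ i, x ⟨j, i⟩ := by
    intro x j
    show ∑ p, J j p * x p = _
    rw [sumSigma (fun p => J j p * x p)]
    rw [Finset.sum_eq_single j]
    · apply Finset.sum_congr rfl
      intro i _
      simp [hJ]
    · intro j' _ hj'
      apply Finset.sum_eq_zero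
      intro i _
      simp [hJ, hj']
    · simp
  -- Matrix.mulVec I y componentwise
  have hImul : ∀ (y : ((j : Fin ℓ) × Fin (m j - 1)) → ℝ) (j : Fin ℓ) (i : Fin (m j)),
      (Matrix.mulVec I y) ⟨j, i⟩
        = ∑ q : Fin (m j - 1),
            (if (i : ℕ) = (q : ℕ) then 1 else if (i : ℕ) = m j - 1 then -1 else 0) * y ⟨j, q⟩ := by
    intro y j i
    show ∑ q, I ⟨j, i⟩ q * y q = _
    rw [sumSigma' (fun q => I ⟨j, i⟩ q * y q)]
    rw [Finset.sum_eq_single j]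
    · apply Finset.sum_congr rfl
      intro q _
      simp [hI]
    · intro j' _ hj'
      apply Finset.sum_eq_zero
      intro q _
      simp [hI, Ne.symm hj']
    · simp
  -- evaluation at a non-last index
  have hIlt : ∀ (y : ((j : Fin ℓ) × Fin (m j - 1)) → ℝ) (j : Fin ℓ) (q' : Fin (m j - 1)),
      (Matrix.mulVec I y) ⟨j, e j q'⟩ = y ⟨j, q'⟩ := by
    intro y j q'
    rw [hImul]
    rw [Finset.sum_eq_single q']
    · simp [he]
    · intro q _ hq
      have : ((e j q' : Fin (m j)) : ℕ) ≠ (q : ℕ) := by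
        simp only [he]
        intro h
        exact hq (Fin.ext h.symm)
      have h2 : ((e j q' : Fin (m j)) : ℕ) ≠ m j - 1 := by
        simp only [he]
        have := q'.isLt; omega
      simp [this, h2]
    · simp
  -- evaluation at the last index
  have hIlast : ∀ (y : ((j : Fin ℓ) × Fin (m j - 1)) → ℝ) (j : Fin ℓ),
      (Matrix.mulVec I y) ⟨j, ⟨m j - 1, hm1 j⟩⟩ = -∑ q, y ⟨j, q⟩ := by
    intro y j
    rw [hImul]
    rw [← Finset.sum_neg_distrib]
    apply Finset.sum_congr rfl
    intro q _
    have hq : (m j - 1 : ℕ) ≠ (q : ℕ) := by have := q.isLt; omega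
    simp [hq]
  -- splitting a block sum into non-last part plus last
  have hsplit : ∀ (x : ((j : Fin ℓ) × Fin (m j)) → ℝ) (j : Fin ℓ),
      ∑ i : Fin (m j), x ⟨j, i⟩
        = (∑ q : Fin (m j - 1), x ⟨j, e j q⟩) + x ⟨j, ⟨m j - 1, hm1 j⟩⟩ := by
    intro x j
    set g : ℕ → ℝ := fun k => if h : k < m j then x ⟨j, ⟨k, h⟩⟩ else 0 with hg
    have h1 : ∑ i : Fin (m j), x ⟨j, i⟩ = ∑ k ∈ Finset.range (m j), g k := by
      rw [← Fin.sum_univ_eq_sum_range]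
      apply Finset.sum_congr rfl
      intro i _
      simp [hg, i.isLt]
    have h2 : ∑ q : Fin (m j - 1), x ⟨j, e j q⟩ = ∑ k ∈ Finset.range (m j - 1), g k := by
      rw [← Fin.sum_univ_eq_sum_range]
      apply Finset.sum_congr rfl
      intro q _
      simp [hg, elt j q, he]
    have hmj : m j = (m j - 1) + 1 := by have := hm j; omega
    have hrange : Finset.range (m j) = Finset.range ((m j - 1) + 1) := by rw [← hmj]
    rw [h1, h2, hrange, Finset.sum_range_succ]
    congr 1
    simp [hg, hm1 j]
  -- if x is in ker of the Cayley matrix, then Matrix.mulVec I (r x) = x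
  have hrec : ∀ (x : ((j : Fin ℓ) × Fin (m j)) → ℝ), Matrix.mulVec J x = 0 → Matrix.mulVec I (r x) = x := by
    intro x hx
    funext p
    obtain ⟨j, i⟩ := p
    rcases Nat.lt_or_ge (i : ℕ) (m j - 1) with hlt | hge
    · have : i = e j ⟨(i : ℕ), hlt⟩ := by simp [he]
      rw [this, hIlt]
    · have hi : i = ⟨m j - 1, hm1 j⟩ := by
        have := i.isLt
        apply Fin.ext
        simp; omega
      rw [hi, hIlast]
      have hz : ∑ i', x ⟨j, i'⟩ = 0 := by rw [← hJmul x j, hx]; rfl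
      rw [hsplit x j] at hz
      have : ∑ q, (r x) ⟨j, q⟩ = ∑ q : Fin (m j - 1), x ⟨j, e j q⟩ := rfl
      rw [this]
      linarith
  -- forward map
  have memF : ∀ x ∈ LinearMap.ker (Matrix.fromRows B J).mulVecLin,
      Matrix.mulVec (B * I) (r x) = 0 := by
    intro x hx
    rw [LinearMap.mem_ker, Matrix.mulVecLin_apply, Matrix.fromRows_mulVec] at hx
    have hB : Matrix.mulVec B x = 0 := by
      funext i; exact congrFun hx (Sum.inl i)
    have hJx : Matrix.mulVec J x = 0 := by
      funext j; exact congrFun hx (Sum.inr j)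
    rw [← Matrix.mulVec_mulVec, hrec x hJx, hB]
  have memG : ∀ y ∈ LinearMap.ker (B * I).mulVecLin,
      Matrix.mulVec (Matrix.fromRows B J) (Matrix.mulVec I y) = 0 := by
    intro y hy
    rw [LinearMap.mem_ker, Matrix.mulVecLin_apply] at hy
    rw [Matrix.fromRows_mulVec]
    have hB : Matrix.mulVec B (Matrix.mulVec I y) = 0 := by rw [Matrix.mulVec_mulVec]; exact hy
    have hJy : Matrix.mulVec J (Matrix.mulVec I y) = 0 := by
      funext j
      rw [hJmul, hsplit (Matrix.mulVec I y) j]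
      have h1 : ∑ q : Fin (m j - 1), (Matrix.mulVec I y) ⟨j, e j q⟩ = ∑ q, y ⟨j, q⟩ :=
        Finset.sum_congr rfl fun q _ => hIlt y j q
      rw [h1, hIlast]
      simp
    rw [hB, hJy]
    funext p
    cases p <;> rfl
  have hry : ∀ (y : ((j : Fin ℓ) × Fin (m j - 1)) → ℝ), r (Matrix.mulVec I y) = y := by
    intro y
    funext q
    obtain ⟨j, q'⟩ := q
    exact hIlt y j q'
  -- the linear maps between the kernels
  let F : LinearMap.ker (Matrix.fromRows B J).mulVecLin →ₗ[ℝ]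
      LinearMap.ker (B * I).mulVecLin :=
    { toFun := fun x => ⟨r x.1, by
        rw [LinearMap.mem_ker, Matrix.mulVecLin_apply]; exact memF x.1 x.2⟩
      map_add' := fun a b => by apply Subtype.ext; funext q; rfl
      map_smul' := fun c a => by apply Subtype.ext; funext q; rfl }
  let G : LinearMap.ker (B * I).mulVecLin →ₗ[ℝ]
      LinearMap.ker (Matrix.fromRows B J).mulVecLin :=
    { toFun := fun y => ⟨Matrix.mulVec I y.1, by
        rw [LinearMap.mem_ker, Matrix.mulVecLin_apply]; exact memG y.1 y.2⟩
      map_add' := fun a b => by apply Subtype.ext; exact Matrix.mulVec_add I a.1 b.1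
      map_smul' := fun c a => by apply Subtype.ext; exact Matrix.mulVec_smul I c a.1 }
  have hFG : F.comp G = LinearMap.id := by
    apply LinearMap.ext
    intro y
    apply Subtype.ext
    exact hry y.1
  have hGF : G.comp F = LinearMap.id := by
    apply LinearMap.ext
    intro x
    apply Subtype.ext
    have hJx : Matrix.mulVec J x.1 = 0 := by
      have hx := x.2
      rw [LinearMap.mem_ker, Matrix.mulVecLin_apply, Matrix.fromRows_mulVec] at hx
      funext j; exact congrFun hx (Sum.inr j)
    exact hrec x.1 hJx
  exact LinearEquiv.finrank_eq (LinearEquiv.ofLinear F G hFG hGF)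
end

section
/- (Second salt theorem, chain case) Let G = (V, E, k) be a labeled simple digraph with one connected component, vertex set V = {1,...,m}, positive edge labels k, and rectangular graph Laplacian R_k ∈ ℝ^{V×V_s} (V_s the source vertices). Let T = {1,...,t} be a terminal strong component, q̂ ∈ ℝ^{V_s}_{≥0} with R_k q̂ = 0, supp q̂ = T, and q̂_1 ≥ ... ≥ q̂_t > q̂_{t+1} = ... = q̂_m = 0. Let β = R_k·1. Then ∑_{i'=1}^{i} β_{i'} ≥ 0 for all i ∈ T; moreover if i < t and q̂_i > q̂_{i+1}, then ∑_{i'=1}^{i} β_{i'} > 0; and ∑_{i'=1}^{t} β_{i'} = 0 if and only if T = V. -/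
lemma cross_exists {α : Type*} {r : α → α → Prop} {P : α → Prop} :
    ∀ {x y : α}, Relation.ReflTransGen r x y → ¬ P x → P y →
    ∃ a b, r a b ∧ Relation.ReflTransGen r x a ∧ ¬ P a ∧ P b := by
  intro x y h
  induction h with
  | refl => exact fun hx hy => absurd hy hx
  | @tail b c hxb hbc ih =>
    intro hx hy
    by_cases hb : P b
    · exact ih hx hb
    · exact ⟨_, _, hbc, hxb, hb, hy⟩

lemma keyA {m : ℕ} (E : Fin m → Fin m → Prop) [DecidableRel E]
    (k : Fin m → Fin m → ℝ) (β : Fin m → ℝ)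
    (hβ : ∀ i : Fin m,
      β i = (∑ j, if E j i then k j i else 0) - (∑ j, if E i j then k i j else 0))
    (S : Finset (Fin m)) :
    ∑ i ∈ S, β i =
      (∑ j ∈ Sᶜ, ∑ i ∈ S, if E j i then k j i else 0)
      - (∑ i ∈ S, ∑ j ∈ Sᶜ, if E i j then k i j else 0) := by
  have h1 : ∀ i : Fin m, (∑ j, if E j i then k j i else 0)
      = (∑ j ∈ S, if E j i then k j i else 0) + (∑ j ∈ Sᶜ, if E j i then k j i else 0) :=
    fun i => (Finset.sum_add_sum_compl S _).symm
  have h2 : ∀ i : Fin m, (∑ j, if E i j then k i j else 0)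
      = (∑ j ∈ S, if E i j then k i j else 0) + (∑ j ∈ Sᶜ, if E i j then k i j else 0) :=
    fun i => (Finset.sum_add_sum_compl S _).symm
  simp only [hβ, h1, h2, Finset.sum_sub_distrib, Finset.sum_add_distrib]
  have h3 : (∑ i ∈ S, ∑ j ∈ S, if E j i then k j i else 0)
      = ∑ i ∈ S, ∑ j ∈ S, if E i j then k i j else 0 := Finset.sum_comm
  have h4 : (∑ i ∈ S, ∑ j ∈ Sᶜ, if E j i then k j i else 0)
      = ∑ j ∈ Sᶜ, ∑ i ∈ S, if E j i then k j i else 0 := Finset.sum_comm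
  linarith

lemma keyB {m : ℕ} (E : Fin m → Fin m → Prop) [DecidableRel E]
    (k : Fin m → Fin m → ℝ) (q : Fin m → ℝ)
    (hker : ∀ i : Fin m,
      (∑ j, if E j i then k j i * q j else 0) = (∑ j, if E i j then k i j else 0) * q i)
    (S : Finset (Fin m)) :
    (∑ j ∈ Sᶜ, ∑ i ∈ S, if E j i then k j i * q j else 0)
      = ∑ i ∈ S, ∑ j ∈ Sᶜ, if E i j then k i j * q i else 0 := by
  have hker' : ∀ i : Fin m,
      (∑ j, if E j i then k j i * q j else 0) = (∑ j, if E i j then k i j * q i else 0) := by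
    intro i
    rw [hker i, Finset.sum_mul]
    exact Finset.sum_congr rfl fun j _ => by split <;> simp
  have key : ∑ i ∈ S, ∑ j, (if E j i then k j i * q j else 0)
      = ∑ i ∈ S, ∑ j, (if E i j then k i j * q i else 0) :=
    Finset.sum_congr rfl fun i _ => hker' i
  have h1 : ∀ (f : Fin m → Fin m → ℝ), (∑ i ∈ S, ∑ j, f i j)
      = (∑ i ∈ S, ∑ j ∈ S, f i j) + ∑ i ∈ S, ∑ j ∈ Sᶜ, f i j := by
    intro f
    rw [← Finset.sum_add_distrib]
    exact Finset.sum_congr rfl fun i _ => (Finset.sum_add_sum_compl S _).symm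
  rw [h1, h1] at key
  have h3 : (∑ i ∈ S, ∑ j ∈ S, if E j i then k j i * q j else 0)
      = ∑ i ∈ S, ∑ j ∈ S, if E i j then k i j * q i else 0 := Finset.sum_comm
  have h4 : (∑ i ∈ S, ∑ j ∈ Sᶜ, if E j i then k j i * q j else 0)
      = ∑ j ∈ Sᶜ, ∑ i ∈ S, if E j i then k j i * q j else 0 := Finset.sum_comm
  linarith



/-- Second salt theorem, chain case: For a connected labeled simple
digraph on `{0,...,m-1}` with positive edge labels `k`, a terminal strong component
`T = {0,...,t-1}`, a nonnegative ordered kernel vector `q̂` of the (rectangular) graph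
Laplacian with support `T`, and `β = R_k · 1`, the partial sums of `β` over initial
segments of `T` are nonnegative, strictly positive where `q̂` strictly decreases, and
the total sum over `T` vanishes iff `T = V`. -/
theorem stmt13 (m t : ℕ) (ht : 0 < t) (htm : t ≤ m)
    (E : Fin m → Fin m → Prop) [DecidableRel E]
    (hsimple : ∀ i, ¬ E i i)
    (k : Fin m → Fin m → ℝ) (hk : ∀ i j, E i j → 0 < k i j)
    (hconn : ∀ i j : Fin m, Relation.ReflTransGen (fun a b => E a b ∨ E b a) i j)
    (hTterm : ∀ i j : Fin m, E i j → (i : ℕ) < t → (j : ℕ) < t)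
    (hTstrong : ∀ i j : Fin m, (i : ℕ) < t → (j : ℕ) < t → Relation.ReflTransGen E i j)
    (q : Fin m → ℝ) (hqnn : ∀ i, 0 ≤ q i)
    (hker : ∀ i : Fin m,
      (∑ j, if E j i then k j i * q j else 0) = (∑ j, if E i j then k i j else 0) * q i)
    (hsupp : ∀ i : Fin m, 0 < q i ↔ (i : ℕ) < t)
    (horder : ∀ i j : Fin m, i ≤ j → q j ≤ q i)
    (β : Fin m → ℝ)
    (hβ : ∀ i : Fin m,
      β i = (∑ j, if E j i then k j i else 0) - (∑ j, if E i j then k i j else 0)) :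
    (∀ i : Fin m, (i : ℕ) < t →
        0 ≤ ∑ i' ∈ Finset.univ.filter (fun i' : Fin m => i' ≤ i), β i') ∧
    (∀ i j : Fin m, (j : ℕ) = (i : ℕ) + 1 → (j : ℕ) < t → q j < q i →
        0 < ∑ i' ∈ Finset.univ.filter (fun i' : Fin m => i' ≤ i), β i') ∧
    ((∑ i' ∈ Finset.univ.filter (fun i' : Fin m => (i' : ℕ) < t), β i') = 0 ↔ t = m) := by
  have hreach : ∀ x y : Fin m, Relation.ReflTransGen E x y → (x : ℕ) < t → (y : ℕ) < t := by
    intro x y h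
    induction h with
    | refl => exact id
    | tail _ hbc ih => exact fun hx => hTterm _ _ hbc (ih hx)
  -- generic bounds for S = initial segment up to i
  have bounds : ∀ i : Fin m, (i : ℕ) < t →
      let S := Finset.univ.filter (fun i' : Fin m => i' ≤ i)
      q i * (∑ i' ∈ S, ∑ j ∈ Sᶜ, if E i' j then k i' j else 0)
        ≤ (∑ j ∈ Sᶜ, ∑ i' ∈ S, if E j i' then k j i' else 0) * q i := by
    intro i hi S
    have hout : q i * (∑ i' ∈ S, ∑ j ∈ Sᶜ, if E i' j then k i' j else 0)
        ≤ ∑ i' ∈ S, ∑ j ∈ Sᶜ, if E i' j then k i' j * q i' else 0 := by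
      rw [Finset.mul_sum]
      refine Finset.sum_le_sum fun i' hi' => ?_
      rw [Finset.mul_sum]
      refine Finset.sum_le_sum fun j _ => ?_
      split
      · have hle : q i ≤ q i' := horder i' i (by simpa [S] using hi')
        nlinarith [hk i' j ‹_›]
      · simp
    have hin : (∑ j ∈ Sᶜ, ∑ i' ∈ S, if E j i' then k j i' * q j else 0)
        ≤ (∑ j ∈ Sᶜ, ∑ i' ∈ S, if E j i' then k j i' else 0) * q i := by
      rw [Finset.sum_mul]
      refine Finset.sum_le_sum fun j hj => ?_
      rw [Finset.sum_mul]
      refine Finset.sum_le_sum fun i' _ => ?_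
      split
      · have hji : i < j := by simpa [S, not_le] using hj
        have hle : q j ≤ q i := horder i j hji.le
        nlinarith [hk j i' ‹_›]
      · simp
    have hB := keyB E k q hker S
    linarith
  have Wnn : ∀ (A B : Finset (Fin m)),
      0 ≤ ∑ a ∈ A, ∑ b ∈ B, if E a b then k a b else 0 := by
    intro A B
    refine Finset.sum_nonneg fun a _ => Finset.sum_nonneg fun b _ => ?_
    split
    · exact (hk _ _ ‹_›).le
    · exact le_rfl
  refine ⟨?_, ?_, ?_⟩
  · -- part 1
    intro i hi
    rw [keyA E k β hβ]
    have hb := bounds i hi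
    have hqi : 0 < q i := (hsupp i).mpr hi
    set S := Finset.univ.filter (fun i' : Fin m => i' ≤ i) with hS
    simp only at hb
    nlinarith
  · -- part 2
    intro i j hji hjt hqlt
    have hit : (i : ℕ) < t := by omega
    rw [keyA E k β hβ]
    set S := Finset.univ.filter (fun i' : Fin m => i' ≤ i) with hS
    have hjS : j ∉ S := by
      simp only [hS, Finset.mem_filter, Finset.mem_univ, true_and]
      intro hle
      have : (j : ℕ) ≤ (i : ℕ) := hle
      omega
    have hiS : i ∈ S := by simp [hS]
    obtain ⟨a, b, hab, hja, haS, hbS⟩ :=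
      cross_exists (r := E) (P := fun x => x ∈ S) (hTstrong j i hjt hit) hjS hiS
    have hat : (a : ℕ) < t := hreach j a hja hjt
    have hqa : 0 < q a := (hsupp a).mpr hat
    have hqj : 0 < q j := (hsupp j).mpr hjt
    -- Qin > 0
    have hQin : 0 < ∑ j' ∈ Sᶜ, ∑ i' ∈ S, if E j' i' then k j' i' * q j' else 0 := by
      have tn : ∀ (j' i' : Fin m), 0 ≤ (if E j' i' then k j' i' * q j' else 0) := by
        intro j' i'
        split
        · exact mul_nonneg (hk _ _ ‹_›).le (hqnn _)
        · exact le_rfl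
      refine Finset.sum_pos' (fun _ _ => Finset.sum_nonneg fun i' _ => tn _ _)
        ⟨a, Finset.mem_compl.mpr haS, ?_⟩
      refine Finset.sum_pos' (fun i' _ => tn _ _) ⟨b, hbS, ?_⟩
      simp only [hab, if_true]
      exact mul_pos (hk _ _ hab) hqa
    -- Qin ≤ q j * Win
    have hin : (∑ j' ∈ Sᶜ, ∑ i' ∈ S, if E j' i' then k j' i' * q j' else 0)
        ≤ (∑ j' ∈ Sᶜ, ∑ i' ∈ S, if E j' i' then k j' i' else 0) * q j := by
      rw [Finset.sum_mul]
      refine Finset.sum_le_sum fun j' hj' => ?_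
      rw [Finset.sum_mul]
      refine Finset.sum_le_sum fun i' _ => ?_
      split
      · have hij' : i < j' := by simpa [hS, not_le] using hj'
        have hle : (j : ℕ) ≤ (j' : ℕ) := by
          have := Fin.lt_def.mp hij'; omega
        have : q j' ≤ q j := horder j j' hle
        nlinarith [hk j' i' ‹_›]
      · simp
    -- q i * Wout ≤ Qout = Qin
    have hout : q i * (∑ i' ∈ S, ∑ j' ∈ Sᶜ, if E i' j' then k i' j' else 0)
        ≤ ∑ i' ∈ S, ∑ j' ∈ Sᶜ, if E i' j' then k i' j' * q i' else 0 := by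
      rw [Finset.mul_sum]
      refine Finset.sum_le_sum fun i' hi' => ?_
      rw [Finset.mul_sum]
      refine Finset.sum_le_sum fun j' _ => ?_
      split
      · have hle : q i ≤ q i' := horder i' i (by simpa [hS] using hi')
        nlinarith [hk i' j' ‹_›]
      · simp
    have hB := keyB E k q hker S
    have hWoutnn := Wnn S Sᶜ
    have hWinnn := Wnn Sᶜ S
    have hWinpos : 0 < (∑ j' ∈ Sᶜ, ∑ i' ∈ S, if E j' i' then k j' i' else 0) := by
      nlinarith
    have hstep : q i * (∑ i' ∈ S, ∑ j' ∈ Sᶜ, if E i' j' then k i' j' else 0)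
        ≤ (∑ j' ∈ Sᶜ, ∑ i' ∈ S, if E j' i' then k j' i' else 0) * q j := by linarith
    nlinarith [mul_pos (sub_pos.mpr hqlt) hWinpos,
      mul_nonneg (sub_pos.mpr hqlt).le hWoutnn]
  · -- part 3
    set S := Finset.univ.filter (fun i' : Fin m => (i' : ℕ) < t) with hS
    have hWout : (∑ i' ∈ S, ∑ j ∈ Sᶜ, if E i' j then k i' j else 0) = 0 := by
      refine Finset.sum_eq_zero fun i' hi' => Finset.sum_eq_zero fun j hj => ?_
      have hi't : (i' : ℕ) < t := by simpa [hS] using hi'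
      have hjt : ¬ (j : ℕ) < t := by simpa [hS] using hj
      rw [if_neg]
      exact fun hE => hjt (hTterm _ _ hE hi't)
    rw [keyA E k β hβ, hWout, sub_zero]
    constructor
    · intro hzero
      by_contra htm'
      have htm'' : t < m := lt_of_le_of_ne htm htm'
      have h0m : 0 < m := lt_of_lt_of_le ht htm
      have hpath := hconn ⟨t, htm''⟩ ⟨0, h0m⟩
      have hv : (⟨t, htm''⟩ : Fin m) ∉ S := by simp [hS]
      have h0 : (⟨0, h0m⟩ : Fin m) ∈ S := by simp [hS, ht]
      obtain ⟨a, b, hab, _, haS, hbS⟩ :=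
        cross_exists (r := fun a b => E a b ∨ E b a) (P := fun x => x ∈ S) hpath hv h0
      rcases hab with hab | hba
      · -- edge into S: contradicts Win = 0
        have hterm : ∀ j ∈ Sᶜ, (∑ i' ∈ S, if E j i' then k j i' else 0) = 0 := by
          have := (Finset.sum_eq_zero_iff_of_nonneg
            (fun j _ => Finset.sum_nonneg fun i' _ => by
              split
              · exact (hk _ _ ‹_›).le
              · exact le_rfl)).mp hzero
          exact this
        have hterm2 := (Finset.sum_eq_zero_iff_of_nonneg
          (fun i' _ => by
            split
            · exact (hk a i' ‹_›).le
            · exact le_rfl)).mp (hterm a (Finset.mem_compl.mpr haS)) b hbS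
        rw [if_pos hab] at hterm2
        exact absurd hterm2 (hk a b hab).ne'
      · -- edge out of T: contradicts terminality
        have hbt : (b : ℕ) < t := by simpa [hS] using hbS
        exact haS (by simp [hS, hTterm b a hba hbt])
    · intro htm'
      subst htm'
      have : Sᶜ = ∅ := by
        ext x
        simp [hS, x.isLt]
      rw [this]
      simp
end

section
/- Let G = (V, E, k) be a labeled digraph, T' ⊆ V a set of vertices, q̂ ≥ 0 a vector with R_k q̂ = 0 such that q̂_i ≥ c for i ∈ T' and q̂_i ≤ c' for i ∉ T', where c ≥ c' > 0. Then the inflow-outflow balance ∑_{(i→i') ∈ (V∖T')→T'} k_{i→i'} − ∑_{(i'→i) ∈ T'→(V∖T')} k_{i'→i} ≥ (c/c' − 1)·∑_{(i'→i) ∈ T'→(V∖T')} k_{i'→i} ≥ 0. -/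
/-- Inflow–outflow balance for an initial segment. If `R_k q̂ = 0`,
`q̂ ≥ c` on `T'` and `q̂ ≤ c'` off `T'` with `c ≥ c' > 0`, then
inflow − outflow ≥ (c/c' − 1) · outflow ≥ 0. -/
theorem stmt14 (m : ℕ) (E : Fin m → Fin m → Prop) [DecidableRel E]
    (k : Fin m → Fin m → ℝ) (hk : ∀ i j, E i j → 0 < k i j)
    (T' : Finset (Fin m))
    (q : Fin m → ℝ) (hqnn : ∀ i, 0 ≤ q i)
    (hker : ∀ i : Fin m,
      (∑ j, if E j i then k j i * q j else 0) = (∑ j, if E i j then k i j else 0) * q i)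
    (c c' : ℝ) (hc' : 0 < c') (hcc' : c' ≤ c)
    (hin : ∀ i ∈ T', c ≤ q i) (hout : ∀ i ∉ T', q i ≤ c') :
    (∑ i, ∑ j, if i ∉ T' ∧ j ∈ T' ∧ E i j then k i j else 0)
      - (∑ i, ∑ j, if i ∈ T' ∧ j ∉ T' ∧ E i j then k i j else 0)
      ≥ (c / c' - 1) * (∑ i, ∑ j, if i ∈ T' ∧ j ∉ T' ∧ E i j then k i j else 0) ∧
    (c / c' - 1) * (∑ i, ∑ j, if i ∈ T' ∧ j ∉ T' ∧ E i j then k i j else 0) ≥ 0 := by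
  set In : ℝ := ∑ i, ∑ j, if i ∉ T' ∧ j ∈ T' ∧ E i j then k i j else 0 with hIn
  set Out : ℝ := ∑ i, ∑ j, if i ∈ T' ∧ j ∉ T' ∧ E i j then k i j else 0 with hOut
  have memsum : ∀ f : Fin m → ℝ,
      (∑ j : Fin m, (if j ∈ T' then f j else 0)) = ∑ j ∈ T', f j := by
    intro f
    simp [Finset.sum_ite_mem]
  -- rewrite In as a T'-indexed sum (over targets)
  have hIn' : In = ∑ i ∈ T', ∑ j, if j ∉ T' ∧ E j i then k j i else 0 := by
    rw [hIn, Finset.sum_comm, ← memsum (fun i => ∑ j, if j ∉ T' ∧ E j i then k j i else 0)]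
    refine Finset.sum_congr rfl fun i _ => ?_
    by_cases h1 : i ∈ T'
    · simp only [h1, if_true]
      refine Finset.sum_congr rfl fun j _ => ?_
      by_cases h2 : j ∈ T' <;> by_cases h3 : E j i <;> simp [h1, h2, h3]
    · simp only [h1, if_false]
      exact Finset.sum_eq_zero fun j _ => by simp [h1]
  have hOut' : Out = ∑ i ∈ T', ∑ j, if j ∉ T' ∧ E i j then k i j else 0 := by
    rw [hOut, ← memsum (fun i => ∑ j, if j ∉ T' ∧ E i j then k i j else 0)]
    refine Finset.sum_congr rfl fun i _ => ?_
    by_cases h1 : i ∈ T'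
    · simp only [h1, if_true]
      refine Finset.sum_congr rfl fun j _ => ?_
      by_cases h2 : j ∈ T' <;> by_cases h3 : E i j <;> simp [h1, h2, h3]
    · simp only [h1, if_false]
      exact Finset.sum_eq_zero fun j _ => by simp [h1]
  have hOutnn : 0 ≤ Out := by
    rw [hOut]
    refine Finset.sum_nonneg fun i _ => Finset.sum_nonneg fun j _ => ?_
    split_ifs with h
    · exact (hk i j h.2.2).le
    · exact le_rfl
  -- splitting lemma for inner sums
  have split : ∀ (P : Fin m → Prop) [DecidablePred P] (f : Fin m → ℝ),
      (∑ j, if P j then f j else 0)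
        = (∑ j, if j ∈ T' ∧ P j then f j else 0) + (∑ j, if j ∉ T' ∧ P j then f j else 0) := by
    intro P _ f
    rw [← Finset.sum_add_distrib]
    refine Finset.sum_congr rfl fun j _ => ?_
    by_cases h1 : j ∈ T' <;> by_cases h2 : P j <;> simp [h1, h2]
  -- summed kernel equation over T'
  have main :
      (∑ i ∈ T', ∑ j, if j ∈ T' ∧ E j i then k j i * q j else 0)
        + (∑ i ∈ T', ∑ j, if j ∉ T' ∧ E j i then k j i * q j else 0)
      = (∑ i ∈ T', ∑ j, if j ∈ T' ∧ E i j then k i j * q i else 0)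
        + (∑ i ∈ T', ∑ j, if j ∉ T' ∧ E i j then k i j * q i else 0) := by
    rw [← Finset.sum_add_distrib, ← Finset.sum_add_distrib]
    refine Finset.sum_congr rfl fun i _ => ?_
    rw [← split (fun j => E j i) (fun j => k j i * q j),
        ← split (fun j => E i j) (fun j => k i j * q i), hker i, Finset.sum_mul]
    refine Finset.sum_congr rfl fun j _ => ?_
    by_cases h : E i j <;> simp [h]
  -- internal terms coincide
  have hint : (∑ i ∈ T', ∑ j, if j ∈ T' ∧ E j i then k j i * q j else 0)
      = (∑ i ∈ T', ∑ j, if j ∈ T' ∧ E i j then k i j * q i else 0) := by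
    have l1 : (∑ i ∈ T', ∑ j, if j ∈ T' ∧ E j i then k j i * q j else 0)
        = ∑ i ∈ T', ∑ j ∈ T', if E j i then k j i * q j else 0 := by
      refine Finset.sum_congr rfl fun i _ => ?_
      rw [← memsum (fun j => if E j i then k j i * q j else 0)]
      refine Finset.sum_congr rfl fun j _ => ?_
      by_cases h1 : j ∈ T' <;> by_cases h2 : E j i <;> simp [h1, h2]
    have l2 : (∑ i ∈ T', ∑ j, if j ∈ T' ∧ E i j then k i j * q i else 0)
        = ∑ i ∈ T', ∑ j ∈ T', if E i j then k i j * q i else 0 := by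
      refine Finset.sum_congr rfl fun i _ => ?_
      rw [← memsum (fun j => if E i j then k i j * q i else 0)]
      refine Finset.sum_congr rfl fun j _ => ?_
      by_cases h1 : j ∈ T' <;> by_cases h2 : E i j <;> simp [h1, h2]
    rw [l1, l2, Finset.sum_comm]
  have hS : (∑ i ∈ T', ∑ j, if j ∉ T' ∧ E j i then k j i * q j else 0)
      = (∑ i ∈ T', ∑ j, if j ∉ T' ∧ E i j then k i j * q i else 0) := by
    linarith [main, hint]
  -- bound the inflow-weighted sum by c' * In
  have hub : (∑ i ∈ T', ∑ j, if j ∉ T' ∧ E j i then k j i * q j else 0) ≤ c' * In := by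
    rw [hIn', Finset.mul_sum]
    refine Finset.sum_le_sum fun i _ => ?_
    rw [Finset.mul_sum]
    refine Finset.sum_le_sum fun j _ => ?_
    split_ifs with h
    · rw [mul_comm c' (k j i)]
      exact mul_le_mul_of_nonneg_left (hout j h.1) (hk j i h.2).le
    · simp
  have hlb : c * Out ≤ (∑ i ∈ T', ∑ j, if j ∉ T' ∧ E i j then k i j * q i else 0) := by
    rw [hOut', Finset.mul_sum]
    refine Finset.sum_le_sum fun i hi => ?_
    rw [Finset.mul_sum]
    refine Finset.sum_le_sum fun j _ => ?_
    split_ifs with h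
    · rw [mul_comm c (k i j)]
      exact mul_le_mul_of_nonneg_left (hin i hi) (hk i j h.2).le
    · simp
  have key : c * Out ≤ c' * In := by linarith
  constructor
  · have h1 : c / c' * Out ≤ In := by
      rw [div_mul_eq_mul_div, div_le_iff₀ hc']
      linarith [key]
    have expand : (c / c' - 1) * Out = c / c' * Out - Out := by ring
    linarith
  · exact mul_nonneg (by rw [sub_nonneg]; exact (one_le_div hc').mpr hcc') hOutnn
end

section
/- Let N = Y·I_E ∈ ℝ^{n×E} be partitioned into blocks N^j = Y^j·I_E^j corresponding to a partition E = E¹ ⊔ ... ⊔ E^ℓ, and suppose ker N = ker N¹ × ... × ker N^ℓ. For each j, define Γ^j = Y^j·R^j where R^j = I_E^j·diag(k^j)·(I_{E,s}^j)ᵀ with positive k^j, and Γ = (Γ¹ ... Γ^ℓ). Then ker Γ = ker Γ¹ × ... × ker Γ^ℓ. -/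
/-- If `ker N` is the direct product of the kernels of the blocks
`N j = Y j * IE j`, then for `Γ j = Y j * (IE j * diag (k j) * (IEs j).transpose)` with
positive `k j`, also `ker Γ` is the direct product of the kernels of the `Γ j`. -/
theorem stmt15 (n ℓ : ℕ) (e v vs : Fin ℓ → ℕ)
    (Y : (j : Fin ℓ) → Matrix (Fin n) (Fin (v j)) ℝ)
    (IE : (j : Fin ℓ) → Matrix (Fin (v j)) (Fin (e j)) ℝ)
    (IEs : (j : Fin ℓ) → Matrix (Fin (vs j)) (Fin (e j)) ℝ)
    (k : (j : Fin ℓ) → Fin (e j) → ℝ) (hk : ∀ j i, 0 < k j i)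
    (hkerN : ∀ α : (j : Fin ℓ) → Fin (e j) → ℝ,
      (∑ j, (Y j * IE j).mulVec (α j) = 0) ↔ ∀ j, (Y j * IE j).mulVec (α j) = 0) :
    ∀ ξ : (j : Fin ℓ) → Fin (vs j) → ℝ,
      (∑ j, (Y j * (IE j * Matrix.diagonal (k j) * (IEs j).transpose)).mulVec (ξ j) = 0)
        ↔ ∀ j, (Y j * (IE j * Matrix.diagonal (k j) * (IEs j).transpose)).mulVec (ξ j) = 0 := by
  intro ξ
  have key : ∀ j, (Y j * (IE j * Matrix.diagonal (k j) * (IEs j).transpose)).mulVec (ξ j)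
      = (Y j * IE j).mulVec
          ((Matrix.diagonal (k j) * (IEs j).transpose).mulVec (ξ j)) := by
    intro j
    rw [Matrix.mulVec_mulVec, Matrix.mul_assoc, Matrix.mul_assoc]
  simp only [key]
  exact hkerN _
end
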